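/- arXiv:1511.00750 — 11 statements merged into one kernel-verified Lean document; each statement's English description precedes it below -/
import Mathlib

section
/- The ratio of segmented to average quality market efficiency satisfies 1 ≤ (∑_{k=1}^K w_k · max_{1≤i≤N} q_{i,k}) / (max_{1≤i≤N} ∑_{k=1}^K w_k · q_{i,k}) ≤ K, provided the denominator is positive. -/
open Finset

def finUnivNe {n : ℕ} (h : 0 < n) : (Finset.univ : Finset (Fin n)).Nonempty :=
  Finset.univ_nonempty_iff.mpr (Fin.pos_iff_nonempty.mp h)

/-! The segmented efficiency `∑ₖ maxᵢ wₖ qᵢₖ` is a sum of maxima and the average one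
`maxᵢ ∑ₖ wₖ qᵢₖ` a maximum of sums. A maximum of sums never exceeds the sum of the maxima;
conversely, by nonnegativity each of the `K` maxima is at most the maximum of the sums. -/

namespace Finset

variable {ι κ α : Type*} [AddCommMonoid α] [SemilatticeSup α] [IsOrderedAddMonoid α]

theorem sup'_sum_le_sum_sup' (s : Finset ι) (hs : s.Nonempty) (t : Finset κ) (f : ι → κ → α) :
    s.sup' hs (fun i => ∑ k ∈ t, f i k) ≤ ∑ k ∈ t, s.sup' hs (f · k) :=
  sup'_le _ _ fun _ hi => sum_le_sum fun k _ => le_sup' (f · k) hi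

theorem sum_sup'_le_card_nsmul_sup'_sum (s : Finset ι) (hs : s.Nonempty) (t : Finset κ)
    (f : ι → κ → α) (hf : ∀ i ∈ s, ∀ k ∈ t, 0 ≤ f i k) :
    ∑ k ∈ t, s.sup' hs (f · k) ≤ t.card • s.sup' hs (fun i => ∑ k ∈ t, f i k) :=
  sum_le_card_nsmul _ _ _ fun _ hk => sup'_le _ _ fun i hi =>
    (single_le_sum (hf i hi) hk).trans (le_sup' (fun i => ∑ k ∈ t, f i k) hi)

end Finset

theorem segmentation_ratio_bounds_general
    (N K : ℕ) (hN : 0 < N)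
    (w : Fin K → ℝ) (hw : ∀ k, 0 ≤ w k)
    (q : Fin N → Fin K → ℝ) (hq : ∀ i k, 0 ≤ q i k)
    (hden : 0 < Finset.univ.sup' (finUnivNe hN) (fun i => ∑ k : Fin K, w k * q i k)) :
    1 ≤ (∑ k : Fin K, w k * Finset.univ.sup' (finUnivNe hN) (fun i => q i k)) /
          (Finset.univ.sup' (finUnivNe hN) (fun i => ∑ k : Fin K, w k * q i k))
    ∧ (∑ k : Fin K, w k * Finset.univ.sup' (finUnivNe hN) (fun i => q i k)) /
          (Finset.univ.sup' (finUnivNe hN) (fun i => ∑ k : Fin K, w k * q i k)) ≤ (K : ℝ) := by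
  have hsegmented : ∑ k : Fin K, w k * univ.sup' (finUnivNe hN) (fun i => q i k)
      = ∑ k : Fin K, univ.sup' (finUnivNe hN) (fun i => w k * q i k) :=
    sum_congr rfl fun k _ => mul₀_sup' (hw k) _ _ _
  have hupper := sum_sup'_le_card_nsmul_sup'_sum univ (finUnivNe hN) univ
    (fun i k => w k * q i k) fun i _ k _ => mul_nonneg (hw k) (hq i k)
  rw [card_univ, Fintype.card_fin, nsmul_eq_mul] at hupper
  rw [le_div_iff₀ hden, div_le_iff₀ hden, one_mul, hsegmented]
  exact ⟨sup'_sum_le_sum_sup' _ _ _ _, hupper⟩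

/-- The ratio of the asymptotic efficiency of the segmented quality ranking to
that of the average quality ranking lies between `1` and `K`. -/
theorem segmentation_ratio_bounds
    (N K : ℕ) (hN : 0 < N) (hK : 0 < K)
    (w : Fin K → ℝ) (hw : ∀ k, 0 ≤ w k)
    (q : Fin N → Fin K → ℝ) (hq : ∀ i k, 0 ≤ q i k)
    (hden : 0 < Finset.univ.sup' (finUnivNe hN) (fun i => ∑ k : Fin K, w k * q i k)) :
    1 ≤ (∑ k : Fin K, w k * Finset.univ.sup' (finUnivNe hN) (fun i => q i k)) /
          (Finset.univ.sup' (finUnivNe hN) (fun i => ∑ k : Fin K, w k * q i k))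
    ∧ (∑ k : Fin K, w k * Finset.univ.sup' (finUnivNe hN) (fun i => q i k)) /
          (Finset.univ.sup' (finUnivNe hN) (fun i => ∑ k : Fin K, w k * q i k)) ≤ (K : ℝ) :=
  segmentation_ratio_bounds_general N K hN w hw q hq hden
end

section
/- The upper bound K in the segmentation benefit ratio is tight: for every K ≥ 1 and every ε > 0 there exist nonnegative weights w : Fin K → ℝ summing to 1 with all w_k > 0, and qualities q : Fin K → Fin K → ℝ with entries in [0,1], such that (∑_k w_k max_i q_{i,k}) / (max_i ∑_k w_k q_{i,k}) > K − ε. -/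
open Finset

/-! The ratio `K` is attained exactly: with uniform weights and the identity quality matrix
(item `i` is perfect for class `i` and useless elsewhere) every class gets quality `1` when
segmented, while any single item serves only a `1 / K` share of the population. -/

section IdentityQuality

variable {ι : Type*} [Fintype ι] [DecidableEq ι]

lemma sup'_ite_eq_one (h : (univ : Finset ι).Nonempty) (k : ι) :
    univ.sup' h (fun i => if i = k then (1 : ℝ) else 0) = 1 :=
  le_antisymm (sup'_le _ _ fun i _ => by split_ifs <;> norm_num)
    (le_sup'_of_le _ (mem_univ k) (by simp))

lemma ratio_of_identity_quality (h : (univ : Finset ι).Nonempty) (w : ι → ℝ) :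
    (∑ k, w k * univ.sup' h (fun i => if i = k then (1 : ℝ) else 0)) /
        univ.sup' h (fun i => ∑ k, w k * if i = k then (1 : ℝ) else 0) =
      (∑ k, w k) / univ.sup' h w := by
  simp only [sup'_ite_eq_one, mul_one, mul_ite, mul_zero, sum_ite_eq, mem_univ, if_true]

end IdentityQuality

/-- Tightness of the upper bound `K` in the segmentation benefit ratio:
for every `K ≥ 1` and `ε > 0` there are positive weights summing to one and
qualities in `[0,1]` whose ratio exceeds `K - ε`. -/
theorem segmentation_ratio_upper_bound_tight
    (K : ℕ) (hK : 1 ≤ K) (ε : ℝ) (hε : 0 < ε) :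
    ∃ (w : Fin K → ℝ) (q : Fin K → Fin K → ℝ),
      (∀ k, 0 < w k) ∧ (∑ k : Fin K, w k = 1) ∧
      (∀ i k, 0 ≤ q i k ∧ q i k ≤ 1) ∧
      (∑ k : Fin K, w k * Finset.univ.sup' (finUnivNe (by omega)) (fun i => q i k)) /
          (Finset.univ.sup' (finUnivNe (by omega : 0 < K)) (fun i => ∑ k : Fin K, w k * q i k))
        > (K : ℝ) - ε := by
  have hK0 : (K : ℝ) ≠ 0 := by positivity
  have hsum : ∑ _k : Fin K, (1 / K : ℝ) = 1 := by simp [hK0]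
  refine ⟨fun _ => 1 / K, fun i k => if i = k then 1 else 0, fun _ => by positivity, hsum,
    fun i k => by dsimp only; split_ifs <;> norm_num, ?_⟩
  rw [ratio_of_identity_quality, hsum, sup'_const, one_div_one_div]
  linarith
end

section
/- For the diagonal quality construction, with equal weights w_k = 1/K and quality matrix q_{i,k} = δ_{ik}·(1 − ε·(1 − δ_{i1})) (i.e., q_{1,1} = 1, q_{k,k} = 1 − ε for k ≠ 1, zero off-diagonal), the ratio (∑_k w_k max_i q_{i,k})/(max_i ∑_k w_k q_{i,k}) equals K − ε(K − 1), and hence tends to K as ε → 0. -/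
open Finset Filter Topology

/-!
With uniform weights `c`, a diagonal quality matrix with nonnegative diagonal `d` has column
maxima `d k` and row sums `c * d i`, so the ratio is `∑ d / max d`. For the construction
`d = (1, 1 - ε, …, 1 - ε)`, whose maximum is `d 0 = 1`, this is `1 + (K - 1)(1 - ε)`.
-/

lemma sup'_ite_eq_of_nonneg {ι α : Type*} [Fintype ι] [DecidableEq ι] [SemilatticeSup α]
    [Zero α] (hs : (univ : Finset ι).Nonempty) (d : ι → α) {k : ι} (hk : 0 ≤ d k) :
    univ.sup' hs (fun i => if i = k then d i else 0) = d k := by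
  refine le_antisymm (sup'_le _ _ fun i _ => ?_) (le_sup'_of_le _ (mem_univ k) (by simp))
  split_ifs with h
  · rw [h]
  · exact hk

lemma diagonal_ratio_of_uniform_weights {ι : Type*} [Fintype ι] [DecidableEq ι]
    (hs : (univ : Finset ι).Nonempty) {c : ℝ} (hc : 0 < c) (d : ι → ℝ) (hd : ∀ i, 0 ≤ d i) :
    (∑ k, c * univ.sup' hs (fun i => if i = k then d i else 0)) /
        univ.sup' hs (fun i => ∑ k, c * if i = k then d i else 0)
      = (∑ k, d k) / univ.sup' hs d := by
  simp only [sup'_ite_eq_of_nonneg hs d (hd _), mul_ite, mul_zero, sum_ite_eq, mem_univ,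
    if_true, ← mul_sum, ← mul₀_sup' hc.le]
  exact mul_div_mul_left _ _ hc.ne'

/-- Item `0` is the paper's undiscounted item `1`. -/
def diagonalQuality (ε : ℝ) {K : ℕ} (i : Fin K) : ℝ :=
  1 - ε * if (i : ℕ) = 0 then 0 else 1

lemma diagonalQuality_nonneg {ε : ℝ} (hε : ε ≤ 1) {K : ℕ} (i : Fin K) :
    0 ≤ diagonalQuality ε i := by
  unfold diagonalQuality
  split_ifs <;> linarith

lemma diagonalQuality_le_one {ε : ℝ} (hε : 0 ≤ ε) {K : ℕ} (i : Fin K) :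
    diagonalQuality ε i ≤ 1 := by
  unfold diagonalQuality
  split_ifs <;> linarith

lemma sup'_diagonalQuality {ε : ℝ} (hε : 0 ≤ ε) {K : ℕ} (hK : 0 < K) :
    univ.sup' (finUnivNe hK) (diagonalQuality ε) = 1 :=
  le_antisymm (sup'_le _ _ fun i _ => diagonalQuality_le_one hε i)
    (le_sup'_of_le _ (mem_univ ⟨0, hK⟩) (by simp [diagonalQuality]))

lemma sum_diagonalQuality (ε : ℝ) {K : ℕ} (hK : 0 < K) :
    ∑ i : Fin K, diagonalQuality ε i = K - ε * (K - 1) := by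
  obtain ⟨n, rfl⟩ := Nat.exists_eq_add_of_lt hK
  simp only [diagonalQuality, Fin.sum_univ_succ, Fin.val_zero, Fin.val_succ, Nat.succ_ne_zero,
    if_true, if_false, sum_const, card_univ, Fintype.card_fin, nsmul_eq_mul]
  push_cast
  ring

/-- For the diagonal quality construction with equal weights `w k = 1/K` and
`q i k = δ_{ik}(1 - ε(1 - δ_{i1}))`, the segmentation benefit ratio equals
`K - ε(K-1)`, and hence tends to `K` as `ε → 0`. -/
theorem diagonal_construction_ratio
    (K : ℕ) (hK : 0 < K) (ε : ℝ) (hε0 : 0 < ε) (hε1 : ε < 1)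
    (w : Fin K → ℝ) (hw : ∀ k, w k = 1 / (K : ℝ))
    (q : Fin K → Fin K → ℝ)
    (hq : ∀ i k, q i k =
      if i = k then 1 - ε * (if (i : ℕ) = 0 then 0 else 1) else 0) :
    (∑ k : Fin K, w k * Finset.univ.sup' (finUnivNe hK) (fun i => q i k)) /
        (Finset.univ.sup' (finUnivNe hK) (fun i => ∑ k : Fin K, w k * q i k))
      = (K : ℝ) - ε * ((K : ℝ) - 1)
    ∧ Tendsto (fun e : ℝ => (K : ℝ) - e * ((K : ℝ) - 1)) (𝓝 0) (𝓝 (K : ℝ)) := by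
  obtain rfl : w = fun _ => 1 / (K : ℝ) := funext hw
  obtain rfl : q = fun i k => if i = k then diagonalQuality ε i else 0 := funext₂ hq
  refine ⟨?_, ?_⟩
  · rw [diagonal_ratio_of_uniform_weights _ (by positivity) _ (diagonalQuality_nonneg hε1.le),
      sum_diagonalQuality ε hK, sup'_diagonalQuality hε0.le hK, div_one]
  · simpa using ((tendsto_id (x := 𝓝 (0 : ℝ))).mul_const ((K : ℝ) - 1)).const_sub (K : ℝ)
end

section
/- The bound of Theorem (popularity signal can be detrimental) is tight from above: for each K ≥ 2 and each δ > 0 there exist parameters (equal weights 1/K, diagonal quality matrix with entries 1 and 1−ε, identity appeal matrix, z = 0, positive visibilities) such that P_AQNSI / P_AQGSI > K − δ. -/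
/-!
With the identity appeal matrix every category `k` is served by item `k` alone, so its
market share is `1` whatever the visibilities, and `P_AQNSI` is the average of the diagonal
qualities, `(K - ε (K - 1)) / K`. The best single item has quality `1` in one category only,
so `P_AQGSI = 1 / K`, and the ratio `K - ε (K - 1)` tends to `K` as `ε → 0`.
-/

open Finset

section IdentityAppeal

variable {ι : Type*} [Fintype ι] [DecidableEq ι]

theorem identity_share_eq_ite (v : ι → ℝ) {k : ι} (hk : v k ≠ 0) (i : ι) :
    v i * (if i = k then (1 : ℝ) else 0) / ∑ j, v j * (if j = k then (1 : ℝ) else 0) =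
      if i = k then 1 else 0 := by
  simp only [mul_ite, mul_one, mul_zero, sum_ite_eq', mem_univ, if_true]
  split_ifs with hik
  · subst hik
    exact div_self hk
  · exact zero_div _

theorem sum_diagonal_mul_identity_share (d v : ι → ℝ) (hv : ∀ k, v k ≠ 0) (k : ι) :
    ∑ i, (if i = k then d i else 0) *
      (v i * (if i = k then (1 : ℝ) else 0) / ∑ j, v j * (if j = k then (1 : ℝ) else 0)) =
      d k := by
  simp_rw [identity_share_eq_ite v (hv k)]
  simp

theorem sup'_sum_mul_diagonal {s : Finset ι} (hs : s.Nonempty) {c : ℝ} (hc : 0 ≤ c)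
    {d : ι → ℝ} (hd : ∀ i ∈ s, d i ≤ 1) {i₀ : ι} (hi₀ : i₀ ∈ s) (hdi₀ : d i₀ = 1) :
    s.sup' hs (fun i => ∑ k, c * (if i = k then d i else 0)) = c := by
  simp only [mul_ite, mul_zero, sum_ite_eq, mem_univ, if_true]
  refine le_antisymm (sup'_le hs _ fun i hi => ?_) (le_sup'_of_le _ hi₀ (by rw [hdi₀, mul_one]))
  simpa using mul_le_mul_of_nonneg_left (hd i hi) hc

end IdentityAppeal

theorem sum_fin_ite_val_eq_zero {K : ℕ} (hK : 0 < K) :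
    ∑ k : Fin K, (if (k : ℕ) = 0 then (0 : ℝ) else 1) = K - 1 := by
  obtain ⟨n, rfl⟩ := Nat.exists_eq_add_of_lt hK
  rw [Fin.sum_univ_succ]
  simp

theorem sum_fin_diagonal_quality {K : ℕ} (hK : 0 < K) (ε : ℝ) :
    ∑ k : Fin K, (1 - ε * (if (k : ℕ) = 0 then 0 else 1)) = K - ε * (K - 1) := by
  rw [sum_sub_distrib, ← mul_sum, sum_fin_ite_val_eq_zero hK]
  simp

/-- Tightness from above of the bound `P_AQNSI / P_AQGSI ≤ K`: for each
`K ≥ 2` and each `δ > 0` there is `ε ∈ (0,1)` such that with equal weights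
`1/K`, diagonal quality matrix (entries `1` and `1 - ε`), identity appeal
matrix and `z = 0`, the ratio exceeds `K - δ` for any positive visibilities
and any ranking `σ`. -/
theorem aqnsi_upper_bound_tight
    (K : ℕ) (hK : 2 ≤ K) (δ : ℝ) (hδ : 0 < δ)
    (v : Fin K → ℝ) (hv : ∀ j, 0 < v j) (σ : Equiv.Perm (Fin K)) :
    ∃ ε : ℝ, 0 < ε ∧ ε < 1 ∧
      (∑ k : Fin K, (1 / (K : ℝ)) * ∑ i : Fin K,
          (if i = k then 1 - ε * (if (i : ℕ) = 0 then 0 else 1) else 0) *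
            (v (σ i) * (if i = k then (1 : ℝ) else 0) /
              (∑ j : Fin K, v (σ j) * (if j = k then (1 : ℝ) else 0)))) /
        (Finset.univ.sup' (finUnivNe (by omega : 0 < K)) (fun i => ∑ k : Fin K,
          (1 / (K : ℝ)) *
            (if i = k then 1 - ε * (if (i : ℕ) = 0 then 0 else 1) else 0)))
      > (K : ℝ) - δ := by
  have hK0 : (0 : ℝ) < K := by positivity
  set ε := δ / (δ + K)
  have hε0 : 0 < ε := by positivity
  have hε1 : ε < 1 := (div_lt_one (by positivity)).mpr (by linarith)
  refine ⟨ε, hε0, hε1, ?_⟩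
  let i₀ : Fin K := ⟨0, by omega⟩
  rw [sum_congr rfl fun k _ => by
      rw [sum_diagonal_mul_identity_share _ (fun i => v (σ i)) (fun i => (hv (σ i)).ne') k],
    ← mul_sum, sum_fin_diagonal_quality (by omega),
    sup'_sum_mul_diagonal _ (by positivity) (fun i _ => by split_ifs <;> linarith)
      (mem_univ i₀) (by simp [i₀]),
    mul_div_cancel_left₀ _ (by positivity)]
  have hεK : ε * (K - 1) < δ := by
    rw [div_mul_eq_mul_div, div_lt_iff₀ (by positivity)]
    nlinarith
  linarith
end

section
/- The lower bound 0 in Theorem (popularity signal can be detrimental) is approached: for each K ≥ 2 and each δ > 0 there exist parameters such that 0 ≤ P_AQNSI / P_AQGSI < δ. Concretely, with equal weights 1/K, diagonal qualities as before, appeal matrix with ones everywhere except diagonal entries equal to ε_A, and z = 0, the ratio tends to 0 as ε_A → 0. -/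
/-!
With `S i = ∑_{j ≠ i} v (σ j)`, which is positive because `K ≥ 2`, the `i`-th term
`v (σ i) εA / (εA v (σ i) + S i)` is continuous in `εA` at `0` and vanishes there, so the whole
ratio tends to `0` as `εA → 0`. It is nonnegative for `εA > 0` because `ε < 1` keeps every
coefficient `1 - ε (1 - δ_{i1})` nonnegative.
-/

open Finset Filter Topology

theorem sum_erase_pos {ι : Type*} [Fintype ι] [DecidableEq ι] [Nontrivial ι] {f : ι → ℝ}
    (hf : ∀ j, 0 < f j) (i : ι) : 0 < ∑ j ∈ univ.erase i, f j :=
  sum_pos (fun j _ => hf j) ((erase_nonempty (mem_univ i)).2 univ_nontrivial)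

theorem tendsto_sum_mul_div_add_nhds_zero {ι : Type*} [Fintype ι] (c a b : ι → ℝ)
    (hb : ∀ i, b i ≠ 0) :
    Tendsto (fun t => ∑ i, c i * (a i * t / (t * a i + b i))) (𝓝 0) (𝓝 0) := by
  have hcont : ContinuousAt (fun t => ∑ i, c i * (a i * t / (t * a i + b i))) 0 := by
    fun_prop (disch := simpa using hb _)
  simpa using hcont.tendsto

theorem sum_mul_div_add_nonneg {ι : Type*} [Fintype ι] {c a b : ι → ℝ} {t : ℝ}
    (hc : ∀ i, 0 ≤ c i) (ha : ∀ i, 0 ≤ a i) (hb : ∀ i, 0 ≤ b i) (ht : 0 ≤ t) :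
    0 ≤ ∑ i, c i * (a i * t / (t * a i + b i)) :=
  sum_nonneg fun i _ =>
    mul_nonneg (hc i) (div_nonneg (mul_nonneg (ha i) ht) (add_nonneg (mul_nonneg ht (ha i)) (hb i)))

theorem aqnsi_lower_bound_approached_general
    (K : ℕ) (hK : 2 ≤ K) (ε : ℝ) (hε1 : ε < 1)
    (v : Fin K → ℝ) (hv : ∀ j, 0 < v j) (σ : Equiv.Perm (Fin K))
    (δ : ℝ) (hδ : 0 < δ) :
    ∃ εA : ℝ, 0 < εA ∧
      0 ≤ (∑ i : Fin K, (1 / (K : ℝ)) * (1 - ε * (if (i : ℕ) = 0 then 0 else 1)) *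
            (v (σ i) * εA / (εA * v (σ i) + ∑ j ∈ Finset.univ.erase i, v (σ j)))) /
          (1 / (K : ℝ))
      ∧ (∑ i : Fin K, (1 / (K : ℝ)) * (1 - ε * (if (i : ℕ) = 0 then 0 else 1)) *
            (v (σ i) * εA / (εA * v (σ i) + ∑ j ∈ Finset.univ.erase i, v (σ j)))) /
          (1 / (K : ℝ)) < δ := by
  have : Nontrivial (Fin K) := Fin.nontrivial_iff_two_le.2 hK
  set c : Fin K → ℝ := fun i => 1 / (K : ℝ) * (1 - ε * (if (i : ℕ) = 0 then 0 else 1))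
  have hc : ∀ i, 0 ≤ c i := fun i => by
    have : 0 ≤ 1 - ε * (if (i : ℕ) = 0 then 0 else 1) := by split_ifs <;> linarith
    positivity
  have hS : ∀ i : Fin K, 0 < ∑ j ∈ univ.erase i, v (σ j) := sum_erase_pos fun j => hv (σ j)
  have hlim : Tendsto (fun t => (∑ i, c i *
      (v (σ i) * t / (t * v (σ i) + ∑ j ∈ univ.erase i, v (σ j)))) / (1 / (K : ℝ))) (𝓝 0) (𝓝 0) := by
    simpa only [zero_div] using (tendsto_sum_mul_div_add_nhds_zero c (fun i => v (σ i)) _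
      fun i => (hS i).ne').div_const (1 / (K : ℝ))
  obtain ⟨t, hlt, ht⟩ :=
    (((hlim.mono_left (nhdsWithin_le_nhds (s := Set.Ioi 0))).eventually (gt_mem_nhds hδ)).and
      self_mem_nhdsWithin).exists
  exact ⟨t, ht, div_nonneg (sum_mul_div_add_nonneg hc (fun i => (hv _).le) (fun i => (hS i).le)
    (le_of_lt ht)) (by positivity), hlt⟩

/-- The lower bound `0` of `P_AQNSI / P_AQGSI` is approached: for each `K ≥ 2`
and each `δ > 0`, with equal weights `1/K`, diagonal qualities and appeal
matrix with ones off the diagonal and `ε_A` on the diagonal (`z = 0`), there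
is `ε_A > 0` making the ratio nonnegative and smaller than `δ`. -/
theorem aqnsi_lower_bound_approached
    (K : ℕ) (hK : 2 ≤ K) (ε : ℝ) (hε0 : 0 < ε) (hε1 : ε < 1)
    (v : Fin K → ℝ) (hv : ∀ j, 0 < v j) (σ : Equiv.Perm (Fin K))
    (δ : ℝ) (hδ : 0 < δ) :
    ∃ εA : ℝ, 0 < εA ∧
      0 ≤ (∑ i : Fin K, (1 / (K : ℝ)) * (1 - ε * (if (i : ℕ) = 0 then 0 else 1)) *
            (v (σ i) * εA / (εA * v (σ i) + ∑ j ∈ Finset.univ.erase i, v (σ j)))) /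
          (1 / (K : ℝ))
      ∧ (∑ i : Fin K, (1 / (K : ℝ)) * (1 - ε * (if (i : ℕ) = 0 then 0 else 1)) *
            (v (σ i) * εA / (εA * v (σ i) + ∑ j ∈ Finset.univ.erase i, v (σ j)))) /
          (1 / (K : ℝ)) < δ :=
  aqnsi_lower_bound_approached_general K hK ε hε1 v hv σ δ hδ
end

section
/- As the total purchases tend to infinity, the generalized appeal converges: if (d^t)_{t∈ℕ} is a sequence of nonnegative vectors in ℝ^N with ∑_j v_{σ(j)} d^t_j → ∞, then ã_i(d^t) := (∑_k w_k q_{i,k} a_{i,k} / D_k(d^t)) / (∑_k w_k q_{i,k} / D_k(d^t)) converges to ā_i := (∑_k w_k a_{i,k} q_{i,k}) / (∑_k w_k q_{i,k}), where D_k(d) = ∑_j v_{σ(j)}(a_{j,k} + d_j) + z. -/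
/-! Each `D_k(d^t)` is a constant plus the weighted total `S_t`, so `S_t / D_k(d^t) → 1`.
Multiplying numerator and denominator of `ã_i(d^t)` by `S_t` turns both into finite sums of terms
`w_k q_{i,k} a_{i,k} · S_t / D_k(d^t)` and `w_k q_{i,k} · S_t / D_k(d^t)`, which converge termwise. -/

open Finset Filter Topology

theorem tendsto_div_const_add_of_tendsto_atTop {α : Type*} {l : Filter α} {S : α → ℝ}
    (hS : Tendsto S l atTop) (c : ℝ) : Tendsto (fun t => S t / (c + S t)) l (𝓝 1) := by
  have hcS : Tendsto (fun t => c + S t) l atTop := tendsto_atTop_add_const_left l c hS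
  have h : Tendsto (fun t => 1 - c / (c + S t)) l (𝓝 (1 - 0)) :=
    tendsto_const_nhds.sub (tendsto_const_nhds.div_atTop hcS)
  rw [sub_zero] at h
  refine h.congr' ?_
  filter_upwards [hcS.eventually_ne_atTop 0] with t ht
  field_simp
  ring

theorem tendsto_sum_div_div_sum_div {ι α : Type*} [Fintype ι] {l : Filter α}
    {D : α → ι → ℝ} {S : α → ℝ} (hS : ∀ᶠ t in l, S t ≠ 0)
    (hSD : ∀ k, Tendsto (fun t => S t / D t k) l (𝓝 1)) (c e : ι → ℝ) (he : ∑ k, e k ≠ 0) :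
    Tendsto (fun t => (∑ k, c k / D t k) / ∑ k, e k / D t k) l
      (𝓝 ((∑ k, c k) / ∑ k, e k)) := by
  have hsum : ∀ x : ι → ℝ, Tendsto (fun t => ∑ k, x k * (S t / D t k)) l (𝓝 (∑ k, x k)) :=
    fun x => by
      simpa using tendsto_finsetSum univ fun k _ => (hSD k).const_mul (x k)
  refine ((hsum c).div (hsum e) he).congr' ?_
  filter_upwards [hS] with t ht
  have hscale : ∀ x : ι → ℝ, ∑ k, x k * (S t / D t k) = S t * ∑ k, x k / D t k := fun x => by
    rw [mul_sum]
    exact sum_congr rfl fun k _ => by ring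
  rw [Pi.div_apply, hscale, hscale, mul_div_mul_left _ _ ht]

theorem generalized_appeal_limit_general
    (N K : ℕ) (hK : 0 < K)
    (w : Fin K → ℝ) (hw : ∀ k, 0 < w k)
    (q : Fin N → Fin K → ℝ) (hq : ∀ i k, 0 < q i k)
    (a : Fin N → Fin K → ℝ)
    (v : Fin N → ℝ)
    (z : ℝ)
    (σ : Equiv.Perm (Fin N))
    (D : (Fin N → ℝ) → Fin K → ℝ)
    (hD : ∀ d k, D d k = ∑ j : Fin N, v (σ j) * (a j k + d j) + z)
    (d : ℕ → Fin N → ℝ)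
    (htend : Tendsto (fun t => ∑ j : Fin N, v (σ j) * d t j) atTop atTop)
    (i : Fin N) :
    Tendsto (fun t =>
        (∑ k : Fin K, w k * q i k * a i k / D (d t) k) /
          (∑ k : Fin K, w k * q i k / D (d t) k))
      atTop
      (𝓝 ((∑ k : Fin K, w k * a i k * q i k) / (∑ k : Fin K, w k * q i k))) := by
  set S := fun t => ∑ j : Fin N, v (σ j) * d t j
  have hDS : ∀ t k, D (d t) k = (∑ j, v (σ j) * a j k + z) + S t := fun t k => by
    simp only [hD, S, mul_add, sum_add_distrib]
    ring
  have hSD : ∀ k, Tendsto (fun t => S t / D (d t) k) atTop (𝓝 1) := fun k => by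
    simpa only [hDS] using tendsto_div_const_add_of_tendsto_atTop htend _
  have hpos : 0 < ∑ k : Fin K, w k * q i k :=
    sum_pos (fun k _ => mul_pos (hw k) (hq i k))
      (univ_nonempty_iff.mpr (Fin.pos_iff_nonempty.mp hK))
  simp_rw [mul_right_comm (w _) (a i _)]
  exact tendsto_sum_div_div_sum_div (htend.eventually_ne_atTop 0) hSD _ _ hpos.ne'

/-- As the weighted total of purchases tends to infinity, the generalized
appeal `ã_i(d^t)` converges to `ā_i = (∑_k w_k a_{i,k} q_{i,k}) / (∑_k w_k q_{i,k})`. -/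
theorem generalized_appeal_limit
    (N K : ℕ) (hN : 0 < N) (hK : 0 < K)
    (w : Fin K → ℝ) (hw : ∀ k, 0 < w k)
    (q : Fin N → Fin K → ℝ) (hq : ∀ i k, 0 < q i k)
    (a : Fin N → Fin K → ℝ) (ha : ∀ i k, 0 < a i k)
    (v : Fin N → ℝ) (hv : ∀ j, 0 < v j)
    (z : ℝ) (hz : 0 ≤ z)
    (σ : Equiv.Perm (Fin N))
    (D : (Fin N → ℝ) → Fin K → ℝ)
    (hD : ∀ d k, D d k = ∑ j : Fin N, v (σ j) * (a j k + d j) + z)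
    (d : ℕ → Fin N → ℝ) (hd : ∀ t j, 0 ≤ d t j)
    (htend : Tendsto (fun t => ∑ j : Fin N, v (σ j) * d t j) atTop atTop)
    (i : Fin N) :
    Tendsto (fun t =>
        (∑ k : Fin K, w k * q i k * a i k / D (d t) k) /
          (∑ k : Fin K, w k * q i k / D (d t) k))
      atTop
      (𝓝 ((∑ k : Fin K, w k * a i k * q i k) / (∑ k : Fin K, w k * q i k))) :=
  generalized_appeal_limit_general N K hK w hw q hq a v z σ D hD d htend i
end

section
/- As the total purchases tend to infinity, the generalized quality converges to the weighted average quality: if ∑_j v_{σ(j)} d^t_j → ∞, then q̃_i(d^t) := (∑_k w_k q_{i,k}/D_k(d^t)) · (∑_j v_{σ(j)}(ã_j(d^t) + d^t_j) + z) converges to q̄_i := ∑_{k=1}^K w_k q_{i,k}. -/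
open Finset Filter Topology

/-!
Write `S = ∑ v_{σ j} d_j`. Then `D_k = S + c_k` for constants `c_k`, and the second factor is
`S + B` where `B = ∑ v_{σ j} ã_j + z` stays bounded because each `ã_j` is a nonnegatively
weighted average of the `a_{j,k}` once all `D_k > 0`. The generalized quality is therefore
`∑_k w_k q_{i,k} (S + B) / (S + c_k)`, and each ratio tends to `1` as `S → ∞`.
-/

theorem abs_sum_mul_div_sum_le {ι : Type*} {s : Finset ι} {p x : ι → ℝ} {M : ℝ}
    (hp : ∀ k ∈ s, 0 ≤ p k) (hx : ∀ k ∈ s, |x k| ≤ M) (hM : 0 ≤ M) :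
    |(∑ k ∈ s, p k * x k) / ∑ k ∈ s, p k| ≤ M := by
  have hsum : 0 ≤ ∑ k ∈ s, p k := sum_nonneg hp
  rcases hsum.eq_or_lt with hzero | hpos
  · simpa [← hzero] using hM
  rw [abs_div, abs_of_pos hpos, div_le_iff₀ hpos, mul_sum]
  calc |∑ k ∈ s, p k * x k| ≤ ∑ k ∈ s, |p k * x k| := abs_sum_le_sum_abs _ _
    _ ≤ ∑ k ∈ s, M * p k := sum_le_sum fun k hk => by
      rw [abs_mul, abs_of_nonneg (hp k hk), mul_comm]
      exact mul_le_mul_of_nonneg_right (hx k hk) (hp k hk)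

theorem tendsto_add_div_add_nhds_one {α : Type*} {l : Filter α} {S B : α → ℝ} (c : ℝ)
    (hS : Tendsto S l atTop) (hB : IsBoundedUnder (· ≤ ·) l (norm ∘ B)) :
    Tendsto (fun t => (S t + B t) / (S t + c)) l (𝓝 1) := by
  have hinv : Tendsto (fun t => (S t + c)⁻¹) l (𝓝 0) :=
    tendsto_inv_atTop_zero.comp (tendsto_atTop_add_const_right _ c hS)
  have hlim : Tendsto (fun t => 1 + B t * (S t + c)⁻¹ - c * (S t + c)⁻¹) l (𝓝 1) := by
    simpa using ((isBoundedUnder_le_mul_tendsto_zero hB hinv).const_add 1).sub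
      (hinv.const_mul c)
  refine hlim.congr' ?_
  filter_upwards [(tendsto_atTop_add_const_right _ c hS).eventually_ne_atTop 0] with t ht
  field_simp
  ring

theorem isBoundedUnder_norm_sum_mul_add {α ι : Type*} [Fintype ι] {l : Filter α}
    {x : α → ι → ℝ} {M : ι → ℝ} (v : ι → ℝ) (z : ℝ) (hx : ∀ᶠ t in l, ∀ j, |x t j| ≤ M j) :
    IsBoundedUnder (· ≤ ·) l (norm ∘ fun t => ∑ j, v j * x t j + z) := by
  refine isBoundedUnder_of_eventually_le (a := ∑ j, |v j| * M j + |z|) ?_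
  filter_upwards [hx] with t ht
  calc ‖∑ j, v j * x t j + z‖ ≤ ∑ j, |v j * x t j| + |z| :=
        (abs_add_le _ _).trans (add_le_add_left (abs_sum_le_sum_abs _ _) _)
    _ ≤ ∑ j, |v j| * M j + |z| := by
      gcongr with j
      rw [abs_mul]
      exact mul_le_mul_of_nonneg_left (ht j) (abs_nonneg _)

theorem generalized_quality_limit_general
    (N K : ℕ)
    (w : Fin K → ℝ) (hw : ∀ k, 0 < w k)
    (q : Fin N → Fin K → ℝ) (hq : ∀ i k, 0 < q i k)
    (a : Fin N → Fin K → ℝ)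
    (v : Fin N → ℝ)
    (z : ℝ)
    (σ : Equiv.Perm (Fin N))
    (D : (Fin N → ℝ) → Fin K → ℝ)
    (hD : ∀ d k, D d k = ∑ j : Fin N, v (σ j) * (a j k + d j) + z)
    (ta : (Fin N → ℝ) → Fin N → ℝ)
    (hta : ∀ d j, ta d j = (∑ k : Fin K, w k * q j k * a j k / D d k) /
        (∑ k : Fin K, w k * q j k / D d k))
    (d : ℕ → Fin N → ℝ)
    (htend : Tendsto (fun t => ∑ j : Fin N, v (σ j) * d t j) atTop atTop)
    (i : Fin N) :
    Tendsto (fun t =>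
        (∑ k : Fin K, w k * q i k / D (d t) k) *
          (∑ j : Fin N, v (σ j) * (ta (d t) j + d t j) + z))
      atTop
      (𝓝 (∑ k : Fin K, w k * q i k)) := by
  set S := fun t => ∑ j : Fin N, v (σ j) * d t j
  set B := fun t => ∑ j : Fin N, v (σ j) * ta (d t) j + z
  set c := fun k => ∑ j : Fin N, v (σ j) * a j k + z
  have hD_eq t k : D (d t) k = S t + c k := by
    simp only [hD, S, c, mul_add, sum_add_distrib]; ring
  have hD_pos : ∀ᶠ t in atTop, ∀ k, 0 < D (d t) k := eventually_all.2 fun k => by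
    simpa only [hD_eq] using (tendsto_atTop_add_const_right _ (c k) htend).eventually_gt_atTop 0
  have hta_le : ∀ᶠ t in atTop, ∀ j, |ta (d t) j| ≤ ∑ k, |a j k| := hD_pos.mono fun t ht j => by
    simp only [hta, mul_div_right_comm _ (a j _)]
    exact abs_sum_mul_div_sum_le (fun k _ => div_nonneg (mul_pos (hw k) (hq j k)).le (ht k).le)
      (fun k _ => single_le_sum (fun k _ => abs_nonneg (a j k)) (mem_univ k))
      (sum_nonneg fun k _ => abs_nonneg _)
  have hB : IsBoundedUnder (· ≤ ·) atTop (norm ∘ B) :=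
    isBoundedUnder_norm_sum_mul_add (fun j => v (σ j)) z hta_le
  have h_eq t : (∑ k, w k * q i k / D (d t) k) * (∑ j, v (σ j) * (ta (d t) j + d t j) + z) =
      ∑ k, w k * q i k * ((S t + B t) / (S t + c k)) := by
    rw [sum_mul]
    refine sum_congr rfl fun k _ => ?_
    simp only [hD_eq, S, B, mul_add, sum_add_distrib]
    ring
  simpa only [h_eq, mul_one] using
    tendsto_finsetSum univ fun k _ => (tendsto_add_div_add_nhds_one (c k) htend hB).const_mul _

/-- As the weighted total of purchases tends to infinity, the generalized
quality `q̃_i(d^t)` converges to the weighted average quality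
`q̄_i = ∑_k w_k q_{i,k}`. -/
theorem generalized_quality_limit
    (N K : ℕ) (hN : 0 < N) (hK : 0 < K)
    (w : Fin K → ℝ) (hw : ∀ k, 0 < w k)
    (q : Fin N → Fin K → ℝ) (hq : ∀ i k, 0 < q i k)
    (a : Fin N → Fin K → ℝ) (ha : ∀ i k, 0 < a i k)
    (v : Fin N → ℝ) (hv : ∀ j, 0 < v j)
    (z : ℝ) (hz : 0 ≤ z)
    (σ : Equiv.Perm (Fin N))
    (D : (Fin N → ℝ) → Fin K → ℝ)
    (hD : ∀ d k, D d k = ∑ j : Fin N, v (σ j) * (a j k + d j) + z)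
    (ta : (Fin N → ℝ) → Fin N → ℝ)
    (hta : ∀ d j, ta d j = (∑ k : Fin K, w k * q j k * a j k / D d k) /
        (∑ k : Fin K, w k * q j k / D d k))
    (d : ℕ → Fin N → ℝ) (hd : ∀ t j, 0 ≤ d t j)
    (htend : Tendsto (fun t => ∑ j : Fin N, v (σ j) * d t j) atTop atTop)
    (i : Fin N) :
    Tendsto (fun t =>
        (∑ k : Fin K, w k * q i k / D (d t) k) *
          (∑ j : Fin N, v (σ j) * (ta (d t) j + d t j) + z))
      atTop
      (𝓝 (∑ k : Fin K, w k * q i k)) :=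
  generalized_quality_limit_general N K w hw q hq a v z σ D hD ta hta d htend i
end

section
/- Lower bound on generalized quality: for every purchase vector d with ∑_j v_{σ(j)} d_j > 0 and z ≥ 0, q̃_i(d) ≥ (1 − (∑_j v_{σ(j)} max_k a_{j,k}) / (∑_j v_{σ(j)} d_j)) · q̄_i, where q̄_i = ∑_k w_k q_{i,k}. -/
open Finset

/- Every denominator `D k` is at most `V + A + z` (with `V = ∑ v d`, `A = ∑ v max a`), so the
first factor of `q̃_i` is at least `q̄_i / (V + A + z)`; since `ã ≥ 0`, the second factor is at
least `V + z`. It remains to note that `(V + z) / (V + A + z) ≥ 1 - A / V`, as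
`(V + z) V - (V - A)(V + A + z) = A (A + z) ≥ 0`. -/

lemma one_sub_div_le_add_div_add_add {V A z : ℝ} (hV : 0 < V) (hA : 0 ≤ A) (hz : 0 ≤ z) :
    1 - A / V ≤ (V + z) / (V + A + z) := by
  rw [one_sub_div hV.ne', div_le_div_iff₀ hV (by linarith)]
  nlinarith [mul_nonneg hA (add_nonneg hA hz)]

lemma sum_div_le_sum_div_of_le {ι : Type*} {s : Finset ι} {c D : ι → ℝ} {M : ℝ}
    (hc : ∀ k ∈ s, 0 ≤ c k) (hD : ∀ k ∈ s, 0 < D k) (hDM : ∀ k ∈ s, D k ≤ M) :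
    (∑ k ∈ s, c k) / M ≤ ∑ k ∈ s, c k / D k := by
  rw [sum_div]
  exact sum_le_sum fun k hk => div_le_div_of_nonneg_left (hc k hk) (hD k hk) (hDM k hk)

lemma sum_mul_add_le_sum_mul_add_sum_mul {ι : Type*} {s : Finset ι} {v x y d : ι → ℝ}
    (hv : ∀ j ∈ s, 0 ≤ v j) (hxy : ∀ j ∈ s, x j ≤ y j) :
    ∑ j ∈ s, v j * (x j + d j) ≤ ∑ j ∈ s, v j * y j + ∑ j ∈ s, v j * d j := by
  rw [← sum_add_distrib]
  refine sum_le_sum fun j hj => ?_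
  rw [← mul_add]
  exact mul_le_mul_of_nonneg_left (by linarith [hxy j hj]) (hv j hj)

lemma sum_mul_le_sum_mul_add {ι : Type*} {s : Finset ι} {v x d : ι → ℝ}
    (hv : ∀ j ∈ s, 0 ≤ v j) (hx : ∀ j ∈ s, 0 ≤ x j) :
    ∑ j ∈ s, v j * d j ≤ ∑ j ∈ s, v j * (x j + d j) :=
  sum_le_sum fun j hj => mul_le_mul_of_nonneg_left (le_add_of_nonneg_left (hx j hj)) (hv j hj)

theorem generalized_quality_lower_bound_general
    (N K : ℕ) (hK : 0 < K)
    (w : Fin K → ℝ) (hw : ∀ k, 0 < w k)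
    (q : Fin N → Fin K → ℝ) (hq : ∀ i k, 0 < q i k)
    (a : Fin N → Fin K → ℝ) (ha : ∀ i k, 0 < a i k)
    (v : Fin N → ℝ) (hv : ∀ j, 0 < v j)
    (z : ℝ) (hz : 0 ≤ z)
    (σ : Equiv.Perm (Fin N))
    (d : Fin N → ℝ)
    (hdpos : 0 < ∑ j : Fin N, v (σ j) * d j)
    (D : Fin K → ℝ)
    (hD : ∀ k, D k = ∑ j : Fin N, v (σ j) * (a j k + d j) + z)
    (ta : Fin N → ℝ)
    (hta : ∀ j, ta j = (∑ k : Fin K, w k * q j k * a j k / D k) /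
        (∑ k : Fin K, w k * q j k / D k))
    (tq : Fin N → ℝ)
    (htq : ∀ i, tq i = (∑ k : Fin K, w k * q i k / D k) *
        (∑ j : Fin N, v (σ j) * (ta j + d j) + z))
    (i : Fin N) :
    (1 - (∑ j : Fin N, v (σ j) * Finset.univ.sup' (finUnivNe hK) (fun k => a j k)) /
          (∑ j : Fin N, v (σ j) * d j)) * (∑ k : Fin K, w k * q i k)
      ≤ tq i := by
  set V := ∑ j : Fin N, v (σ j) * d j
  set A := ∑ j : Fin N, v (σ j) * Finset.univ.sup' (finUnivNe hK) (fun k => a j k)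
  have hv' : ∀ j ∈ univ, 0 ≤ v (σ j) := fun j _ => (hv _).le
  have hwq : ∀ j k, 0 ≤ w k * q j k := fun j k => (mul_pos (hw k) (hq j k)).le
  have hA : 0 ≤ A := sum_nonneg fun j hj =>
    mul_nonneg (hv' j hj) ((ha j ⟨0, hK⟩).le.trans (le_sup' _ (mem_univ _)))
  have hD_pos : ∀ k ∈ univ, 0 < D k := fun k _ => by
    have := sum_mul_le_sum_mul_add (d := d) hv' fun j _ => (ha j k).le
    linarith [hD k]
  have hD_le : ∀ k ∈ univ, D k ≤ V + A + z := fun k _ => by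
    have := sum_mul_add_le_sum_mul_add_sum_mul (d := d) hv' fun j _ =>
      le_sup' (fun k => a j k) (mem_univ k)
    linarith [hD k]
  have hta_nonneg : ∀ j ∈ univ, 0 ≤ ta j := fun j _ => by
    rw [hta j]
    exact div_nonneg
      (sum_nonneg fun k hk => div_nonneg (mul_nonneg (hwq j k) (ha j k).le) (hD_pos k hk).le)
      (sum_nonneg fun k hk => div_nonneg (hwq j k) (hD_pos k hk).le)
  calc (1 - A / V) * ∑ k, w k * q i k
      ≤ (V + z) / (V + A + z) * ∑ k, w k * q i k :=
        mul_le_mul_of_nonneg_right (one_sub_div_le_add_div_add_add hdpos hA hz)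
          (sum_nonneg fun k _ => hwq i k)
    _ = (∑ k, w k * q i k) / (V + A + z) * (V + z) := by ring
    _ ≤ (∑ k, w k * q i k / D k) * (∑ j, v (σ j) * (ta j + d j) + z) :=
        mul_le_mul (sum_div_le_sum_div_of_le (fun k _ => hwq i k) hD_pos hD_le)
          (by linarith [sum_mul_le_sum_mul_add (d := d) hv' hta_nonneg]) (by linarith)
          (sum_nonneg fun k hk => div_nonneg (hwq i k) (hD_pos k hk).le)
    _ = tq i := (htq i).symm

/-- Lower bound on the generalized quality:
`q̃_i(d) ≥ (1 - (∑_j v_{σ(j)} max_k a_{j,k}) / (∑_j v_{σ(j)} d_j)) · q̄_i`. -/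
theorem generalized_quality_lower_bound
    (N K : ℕ) (hN : 0 < N) (hK : 0 < K)
    (w : Fin K → ℝ) (hw : ∀ k, 0 < w k)
    (q : Fin N → Fin K → ℝ) (hq : ∀ i k, 0 < q i k)
    (a : Fin N → Fin K → ℝ) (ha : ∀ i k, 0 < a i k)
    (v : Fin N → ℝ) (hv : ∀ j, 0 < v j)
    (z : ℝ) (hz : 0 ≤ z)
    (σ : Equiv.Perm (Fin N))
    (d : Fin N → ℝ) (hd : ∀ j, 0 ≤ d j)
    (hdpos : 0 < ∑ j : Fin N, v (σ j) * d j)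
    (D : Fin K → ℝ)
    (hD : ∀ k, D k = ∑ j : Fin N, v (σ j) * (a j k + d j) + z)
    (ta : Fin N → ℝ)
    (hta : ∀ j, ta j = (∑ k : Fin K, w k * q j k * a j k / D k) /
        (∑ k : Fin K, w k * q j k / D k))
    (tq : Fin N → ℝ)
    (htq : ∀ i, tq i = (∑ k : Fin K, w k * q i k / D k) *
        (∑ j : Fin N, v (σ j) * (ta j + d j) + z))
    (i : Fin N) :
    (1 - (∑ j : Fin N, v (σ j) * Finset.univ.sup' (finUnivNe hK) (fun k => a j k)) /
          (∑ j : Fin N, v (σ j) * d j)) * (∑ k : Fin K, w k * q i k)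
      ≤ tq i :=
  generalized_quality_lower_bound_general N K hK w hw q hq a ha v hv z hz σ d hdpos D hD ta hta tq
    htq i
end

section
/- Upper bound on generalized quality: for every purchase vector d with ∑_j v_{σ(j)} d_j > 0 and z ≥ 0, q̃_i(d) ≤ (1 + (∑_j v_{σ(j)} max_k a_{j,k}) / (∑_j v_{σ(j)} d_j)) · q̄_i, where q̄_i = ∑_k w_k q_{i,k}. -/
/-
Every `D k` is at least `S + z`, where `S = ∑ⱼ v_{σ(j)} dⱼ`, so `∑ₖ wₖ q_{i,k} / D k ≤ q̄ᵢ / (S + z)`.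
Each `ãⱼ` is a weighted mean of the `a_{j,k}`, hence at most `maxₖ a_{j,k}`, so
the second factor of `q̃ᵢ` is at most `A + S + z` with `A = ∑ⱼ v_{σ(j)} maxₖ a_{j,k}`. Multiplying,
`q̃ᵢ ≤ (1 + A / (S + z)) q̄ᵢ ≤ (1 + A / S) q̄ᵢ`.
-/

open Finset

namespace Finset

variable {ι : Type*} {s : Finset ι}

theorem sum_mul_div_div_sum_div_le_sup' (hs : s.Nonempty) {c D x : ι → ℝ}
    (hc : ∀ k ∈ s, 0 ≤ c k / D k) (hpos : 0 < ∑ k ∈ s, c k / D k) :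
    (∑ k ∈ s, c k * x k / D k) / ∑ k ∈ s, c k / D k ≤ s.sup' hs x := by
  have hmass : (∑ k ∈ s, c k * x k / D k) / ∑ k ∈ s, c k / D k
      = s.centerMass (fun k => c k / D k) x := by
    simp only [centerMass, smul_eq_mul, div_eq_inv_mul, mul_comm, mul_left_comm, mul_assoc]
  rw [hmass]
  exact centerMass_le_sup hc hpos

theorem sum_div_le_sum_div_of_le {c D : ι → ℝ} {m : ℝ} (hc : ∀ k ∈ s, 0 ≤ c k) (hm : 0 < m)
    (hD : ∀ k ∈ s, m ≤ D k) : ∑ k ∈ s, c k / D k ≤ (∑ k ∈ s, c k) / m := by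
  rw [sum_div]
  exact sum_le_sum fun k hk => div_le_div_of_nonneg_left (hc k hk) hm (hD k hk)

end Finset

theorem mul_le_one_add_div_mul_of_le {P X Q A S z : ℝ} (hP₀ : 0 ≤ P) (hP : P ≤ Q / (S + z))
    (hX : X ≤ A + S + z) (hA : 0 ≤ A) (hS : 0 < S) (hz : 0 ≤ z) :
    P * X ≤ (1 + A / S) * Q := by
  have hSz : 0 < S + z := by linarith
  have hQ : 0 ≤ Q := by simpa using (le_div_iff₀ hSz).mp (hP₀.trans hP)
  calc P * X ≤ Q / (S + z) * (A + S + z) :=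
        mul_le_mul_of_nonneg hP hX hP₀ (by linarith)
    _ = (1 + A / (S + z)) * Q := by field_simp; ring
    _ ≤ (1 + A / S) * Q := by gcongr; linarith

theorem generalized_quality_upper_bound_general
    (N K : ℕ) (hK : 0 < K)
    (w : Fin K → ℝ) (hw : ∀ k, 0 < w k)
    (q : Fin N → Fin K → ℝ) (hq : ∀ i k, 0 < q i k)
    (a : Fin N → Fin K → ℝ) (ha : ∀ i k, 0 < a i k)
    (v : Fin N → ℝ) (hv : ∀ j, 0 < v j)
    (z : ℝ) (hz : 0 ≤ z)
    (σ : Equiv.Perm (Fin N))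
    (d : Fin N → ℝ)
    (hdpos : 0 < ∑ j : Fin N, v (σ j) * d j)
    (D : Fin K → ℝ)
    (hD : ∀ k, D k = ∑ j : Fin N, v (σ j) * (a j k + d j) + z)
    (ta : Fin N → ℝ)
    (hta : ∀ j, ta j = (∑ k : Fin K, w k * q j k * a j k / D k) /
        (∑ k : Fin K, w k * q j k / D k))
    (tq : Fin N → ℝ)
    (htq : ∀ i, tq i = (∑ k : Fin K, w k * q i k / D k) *
        (∑ j : Fin N, v (σ j) * (ta j + d j) + z))
    (i : Fin N) :
    tq i ≤ (1 + (∑ j : Fin N, v (σ j) * Finset.univ.sup' (finUnivNe hK) (fun k => a j k)) /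
          (∑ j : Fin N, v (σ j) * d j)) * (∑ k : Fin K, w k * q i k) := by
  set M : Fin N → ℝ := fun j => univ.sup' (finUnivNe hK) (a j)
  have hD_ge (k : Fin K) : ∑ j, v (σ j) * d j + z ≤ D k := by
    rw [hD k]
    gcongr with j
    · exact (hv _).le
    · exact le_add_of_nonneg_left (ha j k).le
  have hD_pos (k : Fin K) : 0 < D k := by linarith [hD_ge k]
  have hta_le (j : Fin N) : ta j ≤ M j := by
    rw [hta j]
    exact sum_mul_div_div_sum_div_le_sup' _
      (fun k _ => div_nonneg (mul_pos (hw k) (hq j k)).le (hD_pos k).le)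
      (sum_pos (fun k _ => div_pos (mul_pos (hw k) (hq j k)) (hD_pos k)) (finUnivNe hK))
  have hM_pos (j : Fin N) : 0 < M j := (ha j ⟨0, hK⟩).trans_le (le_sup' _ (mem_univ _))
  have hX : ∑ j, v (σ j) * (ta j + d j) + z ≤ ∑ j, v (σ j) * M j + ∑ j, v (σ j) * d j + z := by
    rw [← sum_add_distrib]
    gcongr with j
    rw [← mul_add]
    gcongr
    · exact (hv _).le
    · exact hta_le j
  rw [htq i]
  refine mul_le_one_add_div_mul_of_le
    (sum_nonneg fun k _ => div_nonneg (mul_pos (hw k) (hq i k)).le (hD_pos k).le)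
    (sum_div_le_sum_div_of_le (fun k _ => (mul_pos (hw k) (hq i k)).le) (by linarith)
      fun k _ => hD_ge k)
    hX (sum_nonneg fun j _ => mul_nonneg (hv _).le (hM_pos j).le) hdpos hz

/-- Upper bound on the generalized quality:
`q̃_i(d) ≤ (1 + (∑_j v_{σ(j)} max_k a_{j,k}) / (∑_j v_{σ(j)} d_j)) · q̄_i`. -/
theorem generalized_quality_upper_bound
    (N K : ℕ) (hN : 0 < N) (hK : 0 < K)
    (w : Fin K → ℝ) (hw : ∀ k, 0 < w k)
    (q : Fin N → Fin K → ℝ) (hq : ∀ i k, 0 < q i k)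
    (a : Fin N → Fin K → ℝ) (ha : ∀ i k, 0 < a i k)
    (v : Fin N → ℝ) (hv : ∀ j, 0 < v j)
    (z : ℝ) (hz : 0 ≤ z)
    (σ : Equiv.Perm (Fin N))
    (d : Fin N → ℝ) (hd : ∀ j, 0 ≤ d j)
    (hdpos : 0 < ∑ j : Fin N, v (σ j) * d j)
    (D : Fin K → ℝ)
    (hD : ∀ k, D k = ∑ j : Fin N, v (σ j) * (a j k + d j) + z)
    (ta : Fin N → ℝ)
    (hta : ∀ j, ta j = (∑ k : Fin K, w k * q j k * a j k / D k) /
        (∑ k : Fin K, w k * q j k / D k))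
    (tq : Fin N → ℝ)
    (htq : ∀ i, tq i = (∑ k : Fin K, w k * q i k / D k) *
        (∑ j : Fin N, v (σ j) * (ta j + d j) + z))
    (i : Fin N) :
    tq i ≤ (1 + (∑ j : Fin N, v (σ j) * Finset.univ.sup' (finUnivNe hK) (fun k => a j k)) /
          (∑ j : Fin N, v (σ j) * d j)) * (∑ k : Fin K, w k * q i k) :=
  generalized_quality_upper_bound_general N K hK w hw q hq a ha v hv z hz σ d hdpos D hD ta hta tq
    htq i
end

section
/- Sufficient total purchases for strict quality separation: suppose item i* satisfies Q̄_{i*} > Q̄_{i**} where Q̄_i = v_{σ(i)} q̄_i and i** attains the second-highest value of Q̄. If the purchase vector d satisfies ∑_{i} d_i > (max_j v_{σ(j)} / min_j v_{σ(j)}) · (∑_j max_k a_{j,k}) · (Q̄_{i*} + Q̄_{i**}) / (Q̄_{i*} − Q̄_{i**}), then the time-dependent quantities satisfy Q̃_{i*}(d) > Q̃_{i}(d) for all i ≠ i*, where Q̃_i(d) = v_{σ(i)} q̃_i(d). -/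
open Finset

theorem weighted_ratio_mul_lt_of_sum_gt {ι : Type*} (s : Finset ι) {w a d : ι → ℝ}
    {m M p q : ℝ} (hm : 0 < m) (hwm : ∀ j ∈ s, m ≤ w j) (hwM : ∀ j ∈ s, w j ≤ M)
    (ha : ∀ j ∈ s, 0 ≤ a j) (hd : ∀ j ∈ s, 0 ≤ d j) (hp : 0 ≤ p) (hq : 0 < q)
    (hsum : M / m * (∑ j ∈ s, a j) * (p / q) < ∑ j ∈ s, d j) :
    (∑ j ∈ s, w j * a j) / (∑ j ∈ s, w j * d j) * p < q := by
  have hwa_le : ∑ j ∈ s, w j * a j ≤ M * ∑ j ∈ s, a j := by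
    rw [mul_sum]
    exact sum_le_sum fun j hj => mul_le_mul_of_nonneg_right (hwM j hj) (ha j hj)
  have hwd_ge : m * ∑ j ∈ s, d j ≤ ∑ j ∈ s, w j * d j := by
    rw [mul_sum]
    exact sum_le_sum fun j hj => mul_le_mul_of_nonneg_right (hwm j hj) (hd j hj)
  have hwa_nonneg : 0 ≤ ∑ j ∈ s, w j * a j :=
    sum_nonneg fun j hj => mul_nonneg (hm.le.trans (hwm j hj)) (ha j hj)
  have hcross : (∑ j ∈ s, w j * a j) * p < (∑ j ∈ s, w j * d j) * q :=
    calc (∑ j ∈ s, w j * a j) * p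
        ≤ M * (∑ j ∈ s, a j) * p := mul_le_mul_of_nonneg_right hwa_le hp
      _ = M / m * (∑ j ∈ s, a j) * (p / q) * (m * q) := by field_simp
      _ < (∑ j ∈ s, d j) * (m * q) := mul_lt_mul_of_pos_right hsum (mul_pos hm hq)
      _ = m * (∑ j ∈ s, d j) * q := by ring
      _ ≤ (∑ j ∈ s, w j * d j) * q := mul_le_mul_of_nonneg_right hwd_ge hq.le
  have hwd_pos : 0 < ∑ j ∈ s, w j * d j :=
    (mul_pos_iff_of_pos_right hq).mp ((mul_nonneg hwa_nonneg hp).trans_lt hcross)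
  rwa [div_mul_eq_mul_div, div_lt_iff₀ hwd_pos, mul_comm q]

theorem purchases_threshold_separation_general
    (N : ℕ) (hN : 0 < N)
    (v : Fin N → ℝ) (hv : ∀ j, 0 < v j)
    (σ : Equiv.Perm (Fin N))
    (A : Fin N → ℝ) (hA : ∀ j, 0 < A j)  -- `A j = max_k a_{j,k}`
    (qbar : Fin N → ℝ) (hqbar : ∀ i, 0 < qbar i)
    (d : Fin N → ℝ) (hd : ∀ j, 0 ≤ d j)
    (tq : Fin N → ℝ)
    (htq : ∀ i,
      (1 - (∑ j : Fin N, v (σ j) * A j) / (∑ j : Fin N, v (σ j) * d j)) * qbar i ≤ tq i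
      ∧ tq i ≤
        (1 + (∑ j : Fin N, v (σ j) * A j) / (∑ j : Fin N, v (σ j) * d j)) * qbar i)
    (istar istar2 : Fin N)
    (hsep : v (σ istar2) * qbar istar2 < v (σ istar) * qbar istar)
    (hsecond : ∀ i, i ≠ istar → v (σ i) * qbar i ≤ v (σ istar2) * qbar istar2)
    (hdtot : ∑ i : Fin N, d i >
      (Finset.univ.sup' (finUnivNe hN) (fun j => v (σ j)) /
          Finset.univ.inf' (finUnivNe hN) (fun j => v (σ j))) *
        (∑ j : Fin N, A j) *
        ((v (σ istar) * qbar istar + v (σ istar2) * qbar istar2) /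
          (v (σ istar) * qbar istar - v (σ istar2) * qbar istar2))) :
    ∀ i, i ≠ istar → v (σ i) * tq i < v (σ istar) * tq istar := by
  intro i hi
  set R := (∑ j : Fin N, v (σ j) * A j) / (∑ j : Fin N, v (σ j) * d j)
  have hR : 0 ≤ R := div_nonneg (sum_nonneg fun j _ => (mul_pos (hv _) (hA j)).le)
    (sum_nonneg fun j _ => mul_nonneg (hv _).le (hd j))
  have hgap : R * (v (σ istar) * qbar istar + v (σ istar2) * qbar istar2)
      < v (σ istar) * qbar istar - v (σ istar2) * qbar istar2 :=
    weighted_ratio_mul_lt_of_sum_gt univ ((lt_inf'_iff _).mpr fun j _ => hv (σ j))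
      (fun j hj => inf'_le _ hj) (fun j hj => le_sup' (fun j => v (σ j)) hj)
      (fun j _ => (hA j).le) (fun j _ => hd j)
      (add_pos (mul_pos (hv _) (hqbar _)) (mul_pos (hv _) (hqbar _))).le (sub_pos.mpr hsep) hdtot
  calc v (σ i) * tq i
      ≤ v (σ i) * ((1 + R) * qbar i) := mul_le_mul_of_nonneg_left (htq i).2 (hv _).le
    _ = (1 + R) * (v (σ i) * qbar i) := by ring
    _ ≤ (1 + R) * (v (σ istar2) * qbar istar2) :=
        mul_le_mul_of_nonneg_left (hsecond i hi) (by linarith)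
    _ < (1 - R) * (v (σ istar) * qbar istar) := by linear_combination hgap
    _ = v (σ istar) * ((1 - R) * qbar istar) := by ring
    _ ≤ v (σ istar) * tq istar := mul_le_mul_of_nonneg_left (htq istar).1 (hv _).le

/-- Sufficient total purchases for strict quality separation: if the total
number of purchases exceeds
`(max_j v_{σ(j)} / min_j v_{σ(j)}) · (∑_j max_k a_{j,k}) · (Q̄_{i*} + Q̄_{i**}) / (Q̄_{i*} − Q̄_{i**})`,
then `Q̃_{i*}(d) > Q̃_i(d)` for all `i ≠ i*`, where `Q̃_i(d) = v_{σ(i)} q̃_i(d)`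
and `q̃_i(d)` satisfies the two-sided bounds `(1 ± R(d)) q̄_i`. -/
theorem purchases_threshold_separation
    (N : ℕ) (hN : 0 < N)
    (v : Fin N → ℝ) (hv : ∀ j, 0 < v j)
    (σ : Equiv.Perm (Fin N))
    (A : Fin N → ℝ) (hA : ∀ j, 0 < A j)  -- `A j = max_k a_{j,k}`
    (qbar : Fin N → ℝ) (hqbar : ∀ i, 0 < qbar i)
    (d : Fin N → ℝ) (hd : ∀ j, 0 ≤ d j)
    (tq : Fin N → ℝ)
    (htq : ∀ i,
      (1 - (∑ j : Fin N, v (σ j) * A j) / (∑ j : Fin N, v (σ j) * d j)) * qbar i ≤ tq i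
      ∧ tq i ≤
        (1 + (∑ j : Fin N, v (σ j) * A j) / (∑ j : Fin N, v (σ j) * d j)) * qbar i)
    (istar istar2 : Fin N) (hne : istar ≠ istar2)
    (hsep : v (σ istar2) * qbar istar2 < v (σ istar) * qbar istar)
    (hsecond : ∀ i, i ≠ istar → v (σ i) * qbar i ≤ v (σ istar2) * qbar istar2)
    (hdtot : ∑ i : Fin N, d i >
      (Finset.univ.sup' (finUnivNe hN) (fun j => v (σ j)) /
          Finset.univ.inf' (finUnivNe hN) (fun j => v (σ j))) *
        (∑ j : Fin N, A j) *
        ((v (σ istar) * qbar istar + v (σ istar2) * qbar istar2) /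
          (v (σ istar) * qbar istar - v (σ istar2) * qbar istar2))) :
    ∀ i, i ≠ istar → v (σ i) * tq i < v (σ istar) * tq istar :=
  purchases_threshold_separation_general N hN v hv σ A hA qbar hqbar d hd tq htq istar istar2 hsep
    hsecond hdtot
end

section
/- In the 2-class logit reduction, for 0/1 visibilities concentrated on the top i positions, maximizing over permutations reduces to maximizing over subsets of size i: max_{σ ∈ S_N} ∑_{c=1}^2 w_c ∑_{ℓ=1}^N v_{σ(ℓ)} V^c_ℓ r_ℓ / (∑_j v_{σ(j)} V^c_j + 1) = max_{S ⊆ [N], |S| = i} [α ∑_{ℓ∈S} V^1_ℓ r_ℓ/(∑_{j∈S} V^1_j + 1) + (1−α) ∑_{ℓ∈S} V^2_ℓ r_ℓ/(∑_{j∈S} V^2_j + 1)], where v_j = 1 for j ≤ i and v_j = 0 for j > i, w_1 = α, w_2 = 1−α. -/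
open Finset
open scoped Pointwise

/-!
With `v` the indicator of the top `i` positions, the objective of a permutation `σ` only
depends on the set `σ⁻¹ • top` of products it shows. As `σ` runs over all permutations, this
set runs over exactly the `i`-element subsets, since permutations act transitively on them.
-/

namespace Finset

variable {α : Type*} [DecidableEq α]

theorem exists_perm_smul_eq_of_card_eq {s t : Finset α} (h : s.card = t.card) :
    ∃ σ : Equiv.Perm α, σ • s = t := by
  have := Set.powersetCard.isPretransitive (α := α) (n := t.card)
  obtain ⟨σ, hσ⟩ := MulAction.exists_smul_eq (Equiv.Perm α)
    (Set.powersetCard.ofCard h) (Set.powersetCard.ofCard rfl)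
  exact ⟨σ, congrArg Subtype.val hσ⟩

theorem sum_ite_perm_mem_mul_eq_sum_inv_smul [Fintype α] {M : Type*} [NonAssocSemiring M]
    (σ : Equiv.Perm α) (s : Finset α) (f : α → M) :
    ∑ a, (if σ a ∈ s then 1 else 0) * f a = ∑ a ∈ σ⁻¹ • s, f a := by
  simp_rw [ite_mul, one_mul, zero_mul, ← sum_filter]
  congr 1
  ext a
  simp [mem_inv_smul_finset_iff]

variable [Fintype α]

theorem image_univ_perm_inv_smul {s : Finset α} {n : ℕ} (hs : s.card = n) :
    (univ : Finset (Equiv.Perm α)).image (fun σ => σ⁻¹ • s)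
      = ({t | t.card = n} : Finset (Finset α)) := by
  ext t
  simp only [mem_image, mem_univ, true_and, mem_filter]
  constructor
  · rintro ⟨σ, rfl⟩
    rw [card_smul_finset, hs]
  · intro ht
    obtain ⟨σ, hσ⟩ := exists_perm_smul_eq_of_card_eq (hs.trans ht.symm)
    exact ⟨σ⁻¹, by rwa [inv_inv]⟩

theorem sup'_univ_perm_inv_smul {β : Type*} [SemilatticeSup β] {s : Finset α} {n : ℕ}
    (hs : s.card = n) (g : Finset α → β) (H : ({t | t.card = n} : Finset (Finset α)).Nonempty) :
    (univ : Finset (Equiv.Perm α)).sup' univ_nonempty (fun σ => g (σ⁻¹ • s))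
      = ({t | t.card = n} : Finset (Finset α)).sup' H g :=
  (sup'_comp_eq_image univ_nonempty g).trans
    (sup'_congr _ (image_univ_perm_inv_smul hs) fun _ _ => rfl)

end Finset

/-- Key step of the NP-hardness reduction: with 0/1 visibilities concentrated
on the top `i` positions, maximizing the 2-class logit objective over
permutations equals maximizing the assortment objective over subsets of
cardinality `i`. -/
theorem perm_max_eq_subset_max
    (N : ℕ) (i : ℕ) (hiN : i ≤ N)
    (V1 V2 r : Fin N → ℝ)
    (α : ℝ)
    (v : Fin N → ℝ) (hv : ∀ j, v j = if (j : ℕ) < i then 1 else 0) :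
    (Finset.univ : Finset (Equiv.Perm (Fin N))).sup' Finset.univ_nonempty
        (fun σ =>
          α * (∑ ℓ : Fin N, v (σ ℓ) * V1 ℓ * r ℓ) / (∑ j : Fin N, v (σ j) * V1 j + 1)
          + (1 - α) * (∑ ℓ : Fin N, v (σ ℓ) * V2 ℓ * r ℓ) /
              (∑ j : Fin N, v (σ j) * V2 j + 1))
      = ((Finset.univ : Finset (Finset (Fin N))).filter (fun S => S.card = i)).sup'
          (by
            obtain ⟨t, -, ht⟩ :=
              Finset.exists_subset_card_eq (s := (Finset.univ : Finset (Fin N))) (n := i) (by simpa using hiN)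
            exact ⟨t, by simp [ht]⟩)
          (fun S =>
            α * (∑ ℓ ∈ S, V1 ℓ * r ℓ) / (∑ j ∈ S, V1 j + 1)
            + (1 - α) * (∑ ℓ ∈ S, V2 ℓ * r ℓ) / (∑ j ∈ S, V2 j + 1)) := by
  set top : Finset (Fin N) := {j | (j : ℕ) < i}
  have htop : top.card = i := by simp [top, Fin.card_filter_val_lt, hiN]
  have hv_top : ∀ σ : Equiv.Perm (Fin N), ∀ ℓ, v (σ ℓ) = if σ ℓ ∈ top then 1 else 0 := by
    simp [top, hv]
  simp only [mul_assoc, hv_top, sum_ite_perm_mem_mul_eq_sum_inv_smul]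
  rw [← sup'_univ_perm_inv_smul htop]
end
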